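/- Let m be a positive integer and G a CDF on ℝ with finite mean. Then the Hoeffding transform preserves the mean and shrinks the L-scale by a factor (m−1)/m: ∫₀¹ (H_m(G))^{-1}(u) du = ∫₀¹ G^{-1}(u) du, and λ₂(H_m(G)) = ((m−1)/m) · λ₂(G), where λ₂(G) = ∫₀¹ G^{-1}(p)(2p−1) dp. Equivalently, MAD(H_m(G)) = ((m−1)/m) · MAD(G), with MAD(G) = 2λ₂(G). In particular, applied to the empirical CDF 𝔽_n of any sample, the empirical Hoeffding CDF 𝔽_{n,m} = H_m(𝔽_n) satisfies μ(𝔽_{n,m}) = μ(𝔽_n) and MAD(𝔽_{n,m}) = ((m−1)/m) MAD(𝔽_n). -/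

import Mathlib

/-!
The expected order statistics `μ_{k:m}` are nondecreasing in `k`: the difference
`β_{k+1} - β_k` of consecutive Beta densities integrates to zero and changes sign exactly once,
at `k/m`, so pairing it with the monotone quantile function gives a nonnegative integral.
Hence the quantile function of `H_m(G)` is the step function equal to `μ_{k:m}` on
`((k-1)/m, k/m]`, and integrating it against `1` and `2u - 1` gives `∑ₖ μ_{k:m} / m` and
`∑ₖ (2k - 1 - m) μ_{k:m} / m²`. Writing `μ_{k:m} = ∫ G⁻¹ β_k`, the Bernstein identities
`∑ₖ β_k = m` and `∑ₖ (2k - 1 - m) β_k(u) = m (m - 1) (2u - 1)` turn these into `∫ G⁻¹` and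
`((m - 1)/m) λ₂(G)`.
-/

open MeasureTheory Filter Set
open scoped BoundedContinuousFunction ProbabilityTheory

noncomputable section

/-- Density of the Beta(j, m-j+1) distribution. -/
def betaDens (m j : ℕ) (u : ℝ) : ℝ :=
  (m : ℝ) * ((m - 1).choose (j - 1) : ℝ) * u ^ (j - 1) * (1 - u) ^ (m - j)

/-- Quantile function (left-continuous generalized inverse). -/
def quantile (G : ℝ → ℝ) (p : ℝ) : ℝ :=
  sInf {x : ℝ | p ≤ G x}

/-- `G` is a cumulative distribution function on ℝ. -/
structure IsCDF (G : ℝ → ℝ) : Prop where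
  mono : Monotone G
  rightCont : ∀ x, ContinuousWithinAt G (Ici x) x
  tendsto_atBot : Tendsto G atBot (nhds 0)
  tendsto_atTop : Tendsto G atTop (nhds 1)

/-- `G` has finite mean: its quantile function is integrable on (0,1). -/
def HasFiniteMean (G : ℝ → ℝ) : Prop :=
  IntegrableOn (fun u => quantile G u) (Ioo (0:ℝ) 1)

/-- Expected j-th order statistic from a sample of size m drawn from G. -/
def muOS (m j : ℕ) (G : ℝ → ℝ) : ℝ :=
  ∫ u in Ioo (0:ℝ) 1, quantile G u * betaDens m j u

/-- The Hoeffding CDF operator `H_m`. -/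
def hoeffCDF (m : ℕ) (G : ℝ → ℝ) (x : ℝ) : ℝ :=
  (m : ℝ)⁻¹ * ∑ j ∈ Finset.Icc 1 m, if muOS m j G ≤ x then (1:ℝ) else 0

/-- The quantile-Hoeffding operator `I_m`. -/
def quantHoeff (m : ℕ) (h : ℝ → ℝ) (u : ℝ) : ℝ :=
  ∑ j ∈ Finset.Icc 1 m,
    (∫ t in Ioo (0:ℝ) 1, h t * betaDens m j t) *
      (if u ∈ Ioc (((j : ℝ) - 1) / m) ((j : ℝ) / m) then (1:ℝ) else 0)

/-- Empirical CDF of the reals `x 0, ..., x (n-1)`. -/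
def ecdf (n : ℕ) (x : ℕ → ℝ) (t : ℝ) : ℝ :=
  (n : ℝ)⁻¹ * ∑ i ∈ Finset.range n, if x i ≤ t then (1:ℝ) else 0

/-- Empirical CDF of the random sample `X 0, ..., X (n-1)`. -/
def empCDF {Ω : Type*} (X : ℕ → Ω → ℝ) (n : ℕ) (ω : Ω) : ℝ → ℝ :=
  fun t => (n : ℝ)⁻¹ * ∑ i ∈ Finset.range n, if X i ω ≤ t then (1:ℝ) else 0

/-- The L-scale (second L-moment) `λ₂`. -/
def lambda2 (G : ℝ → ℝ) : ℝ :=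
  ∫ p in Ioo (0:ℝ) 1, quantile G p * (2 * p - 1)

lemma Finset.sum_Icc_one_eq_sum_range {M : Type*} [AddCommMonoid M] (m : ℕ) (f : ℕ → M) :
    ∑ j ∈ Finset.Icc 1 m, f j = ∑ ν ∈ Finset.range m, f (ν + 1) := by
  rw [Finset.range_eq_Ico, Finset.sum_Ico_add' f 0 m 1, zero_add, Finset.Ico_add_one_right_eq_Icc]

lemma betaDens_eq_eval_bernsteinPolynomial {j : ℕ} (hj : 1 ≤ j) (m : ℕ) (u : ℝ) :
    betaDens m j u = m * (bernsteinPolynomial ℝ (m - 1) (j - 1)).eval u := by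
  rw [betaDens, bernsteinPolynomial, show m - j = m - 1 - (j - 1) by omega]
  simp only [Polynomial.eval_mul, Polynomial.eval_natCast, Polynomial.eval_pow,
    Polynomial.eval_X, Polynomial.eval_sub, Polynomial.eval_one]
  ring

lemma sum_betaDens (m : ℕ) (u : ℝ) : ∑ j ∈ Finset.Icc 1 m, betaDens m j u = m := by
  rcases m with _ | n
  · simp
  rw [Finset.sum_Icc_one_eq_sum_range]
  simp only [betaDens_eq_eval_bernsteinPolynomial le_add_self, add_tsub_cancel_right,
    ← Finset.mul_sum, ← Polynomial.eval_finsetSum, bernsteinPolynomial.sum, Polynomial.eval_one,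
    mul_one]

lemma sum_mul_betaDens (m : ℕ) (u : ℝ) :
    ∑ j ∈ Finset.Icc 1 m, (2 * (j : ℝ) - 1 - m) * betaDens m j u = m * (m - 1) * (2 * u - 1) := by
  rcases m with _ | n
  · simp
  have hsum := congrArg (Polynomial.eval u) (bernsteinPolynomial.sum ℝ n)
  have hmean := congrArg (Polynomial.eval u) (bernsteinPolynomial.sum_smul ℝ n)
  simp only [Polynomial.eval_finsetSum, nsmul_eq_mul, Polynomial.eval_mul,
    Polynomial.eval_natCast, Polynomial.eval_one, Polynomial.eval_X] at hsum hmean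
  have hterm : ∀ ν : ℕ, (2 * ((ν + 1 : ℕ) : ℝ) - 1 - (n + 1 : ℕ)) *
      betaDens (n + 1) (ν + 1) u = (n + 1) * (2 * (ν * (bernsteinPolynomial ℝ n ν).eval u)
        - n * (bernsteinPolynomial ℝ n ν).eval u) := fun ν => by
    rw [betaDens_eq_eval_bernsteinPolynomial le_add_self]
    push_cast
    ring
  rw [Finset.sum_Icc_one_eq_sum_range]
  simp only [hterm, ← Finset.mul_sum, Finset.sum_sub_distrib, hsum, hmean]
  push_cast
  ring

lemma hasDerivAt_eval_bernsteinPolynomial {j : ℕ} (hj : 1 ≤ j) (m : ℕ) (u : ℝ) :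
    HasDerivAt (fun u => (bernsteinPolynomial ℝ m j).eval u)
      (betaDens m j u - betaDens m (j + 1) u) u := by
  obtain ⟨ν, rfl⟩ := Nat.exists_eq_add_of_le' hj
  refine ((bernsteinPolynomial ℝ m (ν + 1)).hasDerivAt u).congr_deriv ?_
  rw [bernsteinPolynomial.derivative_succ, betaDens_eq_eval_bernsteinPolynomial le_add_self,
    betaDens_eq_eval_bernsteinPolynomial le_add_self]
  simp only [Polynomial.eval_mul, Polynomial.eval_natCast, Polynomial.eval_sub,
    add_tsub_cancel_right]
  ring

lemma betaDens_succ_sub_betaDens {m j : ℕ} (hj : 1 ≤ j) (hjm : j < m) (u : ℝ) :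
    betaDens m (j + 1) u - betaDens m j u
      = m.choose j * u ^ (j - 1) * (1 - u) ^ (m - j - 1) * (m * u - j) := by
  obtain ⟨ν, rfl⟩ := Nat.exists_eq_add_of_le' hj
  obtain ⟨k, rfl⟩ := Nat.exists_eq_add_of_lt hjm
  have hlow := Nat.add_one_mul_choose_eq (ν + 1 + k) ν
  have hhigh := Nat.choose_mul_succ_eq (ν + 1 + k) (ν + 1)
  rw [show ν + 1 + k + 1 - (ν + 1) = k + 1 by omega] at hhigh
  simp only [betaDens, add_tsub_cancel_right, show ν + 1 + k + 1 - (ν + 1 + 1) = k by omega,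
    show ν + 1 + k + 1 - (ν + 1) = k + 1 by omega]
  rify at hlow hhigh
  push_cast
  linear_combination (u ^ (ν + 1) * (1 - u) ^ k) * hhigh - (u ^ ν * (1 - u) ^ (k + 1)) * hlow

@[fun_prop]
lemma continuous_betaDens (m j : ℕ) : Continuous (betaDens m j) := by
  unfold betaDens; fun_prop

lemma integral_betaDens_succ_sub_betaDens {m j : ℕ} (hj : 1 ≤ j) (hjm : j < m) :
    ∫ u in Ioo (0:ℝ) 1, (betaDens m (j + 1) u - betaDens m j u) = 0 := by
  rw [← integral_Ioc_eq_integral_Ioo, ← intervalIntegral.integral_of_le zero_le_one,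
    intervalIntegral.integral_eq_sub_of_hasDerivAt
      (f := fun u => -(bernsteinPolynomial ℝ m j).eval u)
      (fun u _ => ((hasDerivAt_eval_bernsteinPolynomial hj m u).neg).congr_deriv (by ring))
      ((by fun_prop : Continuous fun u => betaDens m (j + 1) u - betaDens m j u)
        |>.intervalIntegrable 0 1)]
  simp [bernsteinPolynomial.eval_at_0, bernsteinPolynomial.eval_at_1, hjm.ne,
    Nat.one_le_iff_ne_zero.1 hj]

lemma setIntegral_mul_nonneg_of_monotoneOn {α : Type*} [LinearOrder α] [MeasurableSpace α]
    {μ : Measure α} {s : Set α} (hs : MeasurableSet s) {Q f : α → ℝ} (hQ : MonotoneOn Q s)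
    {c : α} (hc : c ∈ s) (hf : IntegrableOn f s μ) (hQf : IntegrableOn (fun u => Q u * f u) s μ)
    (hf_zero : ∫ u in s, f u ∂μ = 0) (hf_neg : ∀ u ∈ s, u ≤ c → f u ≤ 0)
    (hf_pos : ∀ u ∈ s, c ≤ u → 0 ≤ f u) :
    0 ≤ ∫ u in s, Q u * f u ∂μ := by
  have hle : ∀ u ∈ s, Q c * f u ≤ Q u * f u := by
    intro u hu
    rcases le_total u c with huc | hcu
    · exact mul_le_mul_of_nonpos_right (hQ hu hc huc) (hf_neg u hu huc)
    · exact mul_le_mul_of_nonneg_right (hQ hc hu hcu) (hf_pos u hu hcu)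
  calc (0 : ℝ) = ∫ u in s, Q c * f u ∂μ := by rw [integral_const_mul, hf_zero, mul_zero]
    _ ≤ ∫ u in s, Q u * f u ∂μ := setIntegral_mono_on (hf.const_mul _) hQf hs hle

lemma IsCDF.bddBelow_setOf_le {G : ℝ → ℝ} (hG : IsCDF G) {p : ℝ} (hp : 0 < p) :
    BddBelow {x | p ≤ G x} := by
  obtain ⟨x₀, hx₀⟩ := eventually_atBot.1 (hG.tendsto_atBot.eventually_lt_const hp)
  exact ⟨x₀, fun y hy => le_of_not_ge fun hyx => (hx₀ y hyx).not_ge hy⟩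

lemma IsCDF.nonempty_setOf_le {G : ℝ → ℝ} (hG : IsCDF G) {p : ℝ} (hp : p < 1) :
    {x | p ≤ G x}.Nonempty :=
  ((hG.tendsto_atTop.eventually_const_lt hp).exists).imp fun _ => le_of_lt

lemma IsCDF.monotoneOn_quantile {G : ℝ → ℝ} (hG : IsCDF G) :
    MonotoneOn (quantile G) (Ioo 0 1) := fun _ hp _ hq hpq =>
  csInf_le_csInf (hG.bddBelow_setOf_le hp.1) (hG.nonempty_setOf_le hq.2)
    fun _ hx => hpq.trans hx

lemma HasFiniteMean.integrableOn_mul_betaDens {G : ℝ → ℝ} (hG : HasFiniteMean G) (m j : ℕ) :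
    IntegrableOn (fun u => quantile G u * betaDens m j u) (Ioo 0 1) :=
  IntegrableOn.mul_continuousOn_of_subset hG (continuous_betaDens m j).continuousOn
    measurableSet_Ioo isCompact_Icc Ioo_subset_Icc_self

lemma muOS_le_muOS_succ {G : ℝ → ℝ} (hG : IsCDF G) (hGm : HasFiniteMean G) {m j : ℕ}
    (hj : 1 ≤ j) (hjm : j < m) : muOS m j G ≤ muOS m (j + 1) G := by
  have hm : (0 : ℝ) < m := by exact_mod_cast Nat.zero_lt_of_lt hjm
  have hc : (j : ℝ) / m ∈ Ioo (0 : ℝ) 1 :=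
    ⟨by positivity, (div_lt_one hm).2 (by exact_mod_cast hjm)⟩
  have hfactor : ∀ u ∈ Ioo (0 : ℝ) 1, 0 ≤ (m.choose j : ℝ) * u ^ (j - 1) * (1 - u) ^ (m - j - 1) :=
    fun u hu => mul_nonneg (mul_nonneg (Nat.cast_nonneg _) (pow_nonneg hu.1.le _))
      (pow_nonneg (sub_nonneg.2 hu.2.le) _)
  have hdiff := setIntegral_mul_nonneg_of_monotoneOn measurableSet_Ioo hG.monotoneOn_quantile hc
    ((by fun_prop : Continuous fun u => betaDens m (j + 1) u - betaDens m j u).integrableOn_Icc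
      |>.mono_set Ioo_subset_Icc_self)
    (((hGm.integrableOn_mul_betaDens m (j + 1)).sub (hGm.integrableOn_mul_betaDens m j)).congr_fun
      (fun u _ => (mul_sub _ _ _).symm) measurableSet_Ioo)
    (integral_betaDens_succ_sub_betaDens hj hjm)
    (fun u hu hu_le => by
      rw [betaDens_succ_sub_betaDens hj hjm]
      refine mul_nonpos_of_nonneg_of_nonpos (hfactor u hu) ?_
      rw [le_div_iff₀ hm] at hu_le
      linarith)
    (fun u hu hu_ge => by
      rw [betaDens_succ_sub_betaDens hj hjm]
      refine mul_nonneg (hfactor u hu) ?_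
      rw [div_le_iff₀ hm] at hu_ge
      linarith)
  rw [muOS, muOS, ← sub_nonneg, ← integral_sub (hGm.integrableOn_mul_betaDens m (j + 1))
    (hGm.integrableOn_mul_betaDens m j)]
  simpa only [mul_sub] using hdiff

lemma muOS_monotoneOn {G : ℝ → ℝ} (hG : IsCDF G) (hGm : HasFiniteMean G) (m : ℕ) :
    MonotoneOn (fun j => muOS m j G) (Icc 1 m) :=
  monotoneOn_of_le_succ ordConnected_Icc fun j _ hj hj' => by
    rw [Order.succ_eq_add_one] at hj' ⊢
    exact muOS_le_muOS_succ hG hGm hj.1 hj'.2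

lemma HasFiniteMean.sum_mul_muOS {G : ℝ → ℝ} (hG : HasFiniteMean G) (m : ℕ) (c : ℕ → ℝ) :
    ∑ j ∈ Finset.Icc 1 m, c j * muOS m j G
      = ∫ u in Ioo (0:ℝ) 1, quantile G u * ∑ j ∈ Finset.Icc 1 m, c j * betaDens m j u := by
  simp only [muOS, ← integral_const_mul, Finset.mul_sum]
  rw [← integral_finsetSum _ fun j _ => (hG.integrableOn_mul_betaDens m j).const_mul (c j)]
  exact integral_congr_ae (ae_of_all _ fun u => Finset.sum_congr rfl fun j _ => by ring)

def stepCDF (m : ℕ) (a : ℕ → ℝ) (x : ℝ) : ℝ :=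
  (m : ℝ)⁻¹ * ∑ j ∈ Finset.Icc 1 m, if a j ≤ x then (1:ℝ) else 0

lemma le_card_filter_le_iff {m k : ℕ} {a : ℕ → ℝ} (ha : MonotoneOn a (Icc 1 m))
    (hk : k ∈ Icc 1 m) (x : ℝ) :
    k ≤ ((Finset.Icc 1 m).filter fun j => a j ≤ x).card ↔ a k ≤ x := by
  constructor
  · intro hcard
    by_contra! hx
    have hsub : (Finset.Icc 1 m).filter fun j => a j ≤ x ⊆ Finset.Icc 1 (k - 1) := fun j hj => by
      rw [Finset.mem_filter, Finset.mem_Icc] at hj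
      rw [Finset.mem_Icc]
      refine ⟨hj.1.1, Nat.le_sub_one_of_lt (lt_of_not_ge fun hkj => ?_)⟩
      exact (ha hk hj.1 hkj).not_gt (hj.2.trans_lt hx)
    have := (Finset.card_le_card hsub).trans_eq (Nat.card_Icc 1 (k - 1))
    have := hk.1
    omega
  · intro hx
    have hsub : Finset.Icc 1 k ⊆ (Finset.Icc 1 m).filter fun j => a j ≤ x := fun j hj => by
      rw [Finset.mem_Icc] at hj
      exact Finset.mem_filter.2 ⟨Finset.mem_Icc.2 ⟨hj.1, hj.2.trans hk.2⟩,
        (ha ⟨hj.1, hj.2.trans hk.2⟩ hk hj.2).trans hx⟩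
    simpa using Finset.card_le_card hsub

lemma le_inv_mul_natCast_iff {m k : ℕ} (hm : 0 < m) {u : ℝ}
    (hu : u ∈ Ioc (((k : ℝ) - 1) / m) (k / m)) (N : ℕ) :
    u ≤ (m : ℝ)⁻¹ * N ↔ k ≤ N := by
  have hm' : (0 : ℝ) < m := by exact_mod_cast hm
  rw [inv_mul_eq_div, le_div_iff₀ hm']
  obtain ⟨hlow, hhigh⟩ := hu
  rw [div_lt_iff₀ hm'] at hlow
  rw [le_div_iff₀ hm'] at hhigh
  constructor
  · intro h
    have : (k : ℝ) < N + 1 := by linarith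
    exact_mod_cast Nat.lt_add_one_iff.1 (by exact_mod_cast this)
  · intro h
    exact hhigh.trans (by exact_mod_cast h)

lemma quantile_stepCDF {m k : ℕ} {a : ℕ → ℝ} (ha : MonotoneOn a (Icc 1 m)) (hk : k ∈ Icc 1 m)
    {u : ℝ} (hu : u ∈ Ioc (((k : ℝ) - 1) / m) (k / m)) :
    quantile (stepCDF m a) u = a k := by
  have hlevel : {x | u ≤ stepCDF m a x} = Ici (a k) := by
    ext x
    rw [mem_ofPred_eq, mem_Ici, stepCDF, Finset.sum_boole,
      le_inv_mul_natCast_iff (hk.1.trans_lt' zero_lt_one |>.trans_le hk.2) hu,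
      le_card_filter_le_iff ha hk]
  rw [quantile, hlevel, csInf_Ici]

lemma integral_quantile_stepCDF_mul {m : ℕ} (hm : 0 < m) {a : ℕ → ℝ}
    (ha : MonotoneOn a (Icc 1 m)) {w : ℝ → ℝ} (hw : Continuous w) :
    ∫ u in Ioo (0:ℝ) 1, quantile (stepCDF m a) u * w u
      = ∑ k ∈ Finset.Icc 1 m, a k * ∫ u in ((k : ℝ) - 1) / m..k / m, w u := by
  have hm' : (0 : ℝ) < m := by exact_mod_cast hm
  have hle : ∀ ν : ℕ, (ν : ℝ) / m ≤ (ν + 1 : ℕ) / m := fun ν =>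
    div_le_div_of_nonneg_right (by simp) hm'.le
  have hpiece : ∀ ν < m, EqOn (fun u => quantile (stepCDF m a) u * w u)
      (fun u => a (ν + 1) * w u) (uIoc ((ν : ℝ) / m) ((ν + 1 : ℕ) / m)) := by
    intro ν hν u hu
    rw [uIoc_of_le (hle ν)] at hu
    dsimp only
    rw [quantile_stepCDF ha ⟨le_add_self, hν⟩ (by push_cast at hu ⊢; rwa [add_sub_cancel_right])]
  have hsplit := intervalIntegral.sum_integral_adjacent_intervals
    (f := fun u => quantile (stepCDF m a) u * w u) (a := fun ν : ℕ => (ν : ℝ) / m) (n := m)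
    (μ := volume) fun ν hν =>
      ((continuous_const.mul hw).intervalIntegrable _ _).congr (hpiece ν hν).symm
  simp only [Nat.cast_zero, zero_div, div_self hm'.ne'] at hsplit
  rw [← integral_Ioc_eq_integral_Ioo, ← intervalIntegral.integral_of_le zero_le_one, ← hsplit,
    Finset.sum_Icc_one_eq_sum_range]
  refine Finset.sum_congr rfl fun ν hν => ?_
  rw [intervalIntegral.integral_congr_ae
      (ae_of_all _ fun u hu => hpiece ν (Finset.mem_range.1 hν) hu),
    intervalIntegral.integral_const_mul, Nat.cast_succ, add_sub_cancel_right]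

lemma hoeffCDF_eq_stepCDF (m : ℕ) (G : ℝ → ℝ) : hoeffCDF m G = stepCDF m (muOS m · G) := rfl

theorem integral_quantile_hoeffCDF {m : ℕ} (hm : 0 < m) {G : ℝ → ℝ} (hG : IsCDF G)
    (hGm : HasFiniteMean G) :
    ∫ u in Ioo (0:ℝ) 1, quantile (hoeffCDF m G) u = ∫ u in Ioo (0:ℝ) 1, quantile G u := by
  have hm' : (m : ℝ) ≠ 0 := by positivity
  have h := integral_quantile_stepCDF_mul hm (muOS_monotoneOn hG hGm m) (w := fun _ => 1)
    continuous_const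
  simp only [mul_one, intervalIntegral.integral_const, smul_eq_mul] at h
  have hpiece : ∀ k ∈ Finset.Icc 1 m,
      muOS m k G * ((k : ℝ) / m - ((k : ℝ) - 1) / m) = (m : ℝ)⁻¹ * muOS m k G := fun k _ => by
    field_simp; ring
  have hweights : ∀ u, ∑ k ∈ Finset.Icc 1 m, (m : ℝ)⁻¹ * betaDens m k u = 1 := fun u => by
    rw [← Finset.mul_sum, sum_betaDens, inv_mul_cancel₀ hm']
  rw [hoeffCDF_eq_stepCDF, h, Finset.sum_congr rfl hpiece, hGm.sum_mul_muOS]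
  simp only [hweights, mul_one]

lemma integral_two_mul_sub_one (a b : ℝ) :
    ∫ u in a..b, (2 * u - 1) = (b ^ 2 - a ^ 2) - (b - a) := by
  rw [intervalIntegral.integral_sub ((continuous_const_mul 2).intervalIntegrable a b)
    intervalIntegrable_const, intervalIntegral.integral_const_mul,
    integral_id, intervalIntegral.integral_const, smul_eq_mul]
  ring

theorem lambda2_hoeffCDF {m : ℕ} (hm : 0 < m) {G : ℝ → ℝ} (hG : IsCDF G)
    (hGm : HasFiniteMean G) :
    lambda2 (hoeffCDF m G) = (((m : ℝ) - 1) / m) * lambda2 G := by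
  have hm' : (m : ℝ) ≠ 0 := by positivity
  have h := integral_quantile_stepCDF_mul hm (muOS_monotoneOn hG hGm m) (w := fun u => 2 * u - 1)
    (by fun_prop)
  have hpiece : ∀ k ∈ Finset.Icc 1 m,
      muOS m k G * ∫ u in ((k : ℝ) - 1) / m..k / m, (2 * u - 1)
        = ((2 * k - 1 - m) / m ^ 2) * muOS m k G := fun k _ => by
    rw [integral_two_mul_sub_one]; field_simp; ring
  have hweights : ∀ u, ∑ k ∈ Finset.Icc 1 m, ((2 * k - 1 - m) / m ^ 2) * betaDens m k u
      = ((m : ℝ) - 1) / m * (2 * u - 1) := fun u => by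
    simp_rw [div_mul_eq_mul_div, ← Finset.sum_div, sum_mul_betaDens]
    field_simp
  rw [lambda2, hoeffCDF_eq_stepCDF, h, Finset.sum_congr rfl hpiece, hGm.sum_mul_muOS, lambda2,
    ← integral_const_mul]
  simp only [hweights]
  exact integral_congr_ae (ae_of_all _ fun u => by ring)

lemma IsCDF.quantile_mem_Icc {G : ℝ → ℝ} (hG : IsCDF G) {a b : ℝ} (ha : G a = 0) (hb : G b = 1)
    {p : ℝ} (hp : p ∈ Ioo (0:ℝ) 1) : quantile G p ∈ Icc a b := by
  have hb_mem : b ∈ {x | p ≤ G x} := by rw [mem_ofPred_eq, hb]; exact hp.2.le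
  have ha_le : ∀ x ∈ {x | p ≤ G x}, a ≤ x := fun x hx =>
    le_of_not_gt fun hxa => (hp.1.trans_le hx).not_ge ((hG.mono hxa.le).trans_eq ha)
  exact ⟨le_csInf ⟨b, hb_mem⟩ ha_le, csInf_le ⟨a, ha_le⟩ hb_mem⟩

lemma IsCDF.hasFiniteMean_of_eq_zero_of_eq_one {G : ℝ → ℝ} (hG : IsCDF G) {a b : ℝ}
    (ha : G a = 0) (hb : G b = 1) : HasFiniteMean G := by
  have hmeas := aemeasurable_restrict_of_monotoneOn (μ := volume) measurableSet_Ioo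
    hG.monotoneOn_quantile
  refine Integrable.of_bound hmeas.aestronglyMeasurable (max |a| |b|)
    ((ae_restrict_iff' measurableSet_Ioo).2 (ae_of_all _ fun p hp => ?_))
  obtain ⟨hap, hpb⟩ := hG.quantile_mem_Icc ha hb hp
  exact abs_le_max_abs_abs hap hpb

lemma continuousWithinAt_Ici_ite_le (a t : ℝ) :
    ContinuousWithinAt (fun s => if a ≤ s then (1:ℝ) else 0) (Ici t) t := by
  by_cases hat : a ≤ t
  · exact continuousWithinAt_const.congr (fun s hs => if_pos (hat.trans hs)) (if_pos hat)
  · refine (continuousAt_const.congr (?_ : (fun _ => (0:ℝ)) =ᶠ[nhds t] _)).continuousWithinAt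
    filter_upwards [Iio_mem_nhds (lt_of_not_ge hat)] with s hs
    exact (if_neg (not_le.2 hs)).symm

lemma ecdf_eq_zero {n : ℕ} {x : ℕ → ℝ} {t : ℝ} (h : ∀ i < n, t < x i) : ecdf n x t = 0 := by
  rw [ecdf, Finset.sum_eq_zero fun i hi => if_neg (not_le.2 (h i (Finset.mem_range.1 hi))),
    mul_zero]

lemma ecdf_eq_one {n : ℕ} (hn : 0 < n) {x : ℕ → ℝ} {t : ℝ} (h : ∀ i < n, x i ≤ t) :
    ecdf n x t = 1 := by
  rw [ecdf, Finset.sum_congr rfl fun i hi => if_pos (h i (Finset.mem_range.1 hi)),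
    Finset.sum_const, Finset.card_range, nsmul_one, inv_mul_cancel₀ (by positivity)]

lemma ecdf_monotone (n : ℕ) (x : ℕ → ℝ) : Monotone (ecdf n x) := fun s t hst =>
  mul_le_mul_of_nonneg_left (Finset.sum_le_sum fun i _ => by
    split_ifs with hs ht <;> first | exact absurd (hs.trans hst) ht | norm_num)
    (by positivity)

lemma exists_ecdf_eq_zero_and_eq_one {n : ℕ} (hn : 0 < n) (x : ℕ → ℝ) :
    ∃ L U : ℝ, (∀ t ≤ L, ecdf n x t = 0) ∧ ∀ t ≥ U, ecdf n x t = 1 := by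
  obtain ⟨L, hL⟩ := ((Finset.range n).image x).bddBelow
  obtain ⟨U, hU⟩ := ((Finset.range n).image x).bddAbove
  have hmem : ∀ i < n, x i ∈ ((Finset.range n).image x : Set ℝ) := fun i hi =>
    Finset.mem_coe.2 (Finset.mem_image_of_mem x (Finset.mem_range.2 hi))
  exact ⟨L - 1, U, fun t ht => ecdf_eq_zero fun i hi => by linarith [hL (hmem i hi)],
    fun t ht => ecdf_eq_one hn fun i hi => (hU (hmem i hi)).trans ht⟩

lemma isCDF_ecdf {n : ℕ} (hn : 0 < n) (x : ℕ → ℝ) : IsCDF (ecdf n x) := by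
  obtain ⟨L, U, hL, hU⟩ := exists_ecdf_eq_zero_and_eq_one hn x
  exact {
    mono := ecdf_monotone n x
    rightCont := fun t => continuousWithinAt_const.mul
      (tendsto_finsetSum _ fun i _ => continuousWithinAt_Ici_ite_le (x i) t)
    tendsto_atBot :=
      tendsto_const_nhds.congr' (eventually_atBot.2 ⟨L, fun t ht => (hL t ht).symm⟩)
    tendsto_atTop :=
      tendsto_const_nhds.congr' (eventually_atTop.2 ⟨U, fun t ht => (hU t ht).symm⟩) }

lemma hasFiniteMean_ecdf {n : ℕ} (hn : 0 < n) (x : ℕ → ℝ) : HasFiniteMean (ecdf n x) := by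
  obtain ⟨L, U, hL, hU⟩ := exists_ecdf_eq_zero_and_eq_one hn x
  exact (isCDF_ecdf hn x).hasFiniteMean_of_eq_zero_of_eq_one (hL L le_rfl) (hU U le_rfl)

/-- The Hoeffding transform preserves the mean and shrinks the L-scale (and the MAD)
by the factor `(m−1)/m`; in particular this holds for the empirical Hoeffding CDF. -/
theorem hoeffCDF_mean_and_Lscale
    (m : ℕ) (hm : 0 < m) (G : ℝ → ℝ) (hG : IsCDF G) (hGmean : HasFiniteMean G) :
    ((∫ u in Ioo (0:ℝ) 1, quantile (hoeffCDF m G) u) = ∫ u in Ioo (0:ℝ) 1, quantile G u) ∧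
    lambda2 (hoeffCDF m G) = (((m : ℝ) - 1) / m) * lambda2 G ∧
    2 * lambda2 (hoeffCDF m G) = (((m : ℝ) - 1) / m) * (2 * lambda2 G) ∧
    (∀ n : ℕ, 0 < n → ∀ x : ℕ → ℝ,
      ((∫ u in Ioo (0:ℝ) 1, quantile (hoeffCDF m (ecdf n x)) u)
          = ∫ u in Ioo (0:ℝ) 1, quantile (ecdf n x) u) ∧
      2 * lambda2 (hoeffCDF m (ecdf n x))
          = (((m : ℝ) - 1) / m) * (2 * lambda2 (ecdf n x))) := by
  refine ⟨integral_quantile_hoeffCDF hm hG hGmean, lambda2_hoeffCDF hm hG hGmean, ?_,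
    fun n hn x => ⟨integral_quantile_hoeffCDF hm (isCDF_ecdf hn x) (hasFiniteMean_ecdf hn x), ?_⟩⟩
  · rw [lambda2_hoeffCDF hm hG hGmean]
    ring
  · rw [lambda2_hoeffCDF hm (isCDF_ecdf hn x) (hasFiniteMean_ecdf hn x)]
    ring
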